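/- Let N be a prime, let P, Q ∈ ℤ[x] be polynomials with P(0) = Q(0) = 0, and let α, β ∈ (1/N)ℤ/ℤ. Define p(x) = e(αx² + βx) on ℤ/Nℤ. Then for all functions f, g, k : ℤ/Nℤ → ℂ, Λ(f,g,k,p) = 𝔼_{x,y} f̃(x) g̃(x+P(y)) k̃(x+Q(y)) e(2α·P(y)·Q(y)), where f̃(x) = f(x)e(−αx²−βx), g̃(x) = g(x)e(αx²+βx), and k̃(x) = k(x)e(αx²+βx). -/

import Mathlib

open Finset

noncomputable section

/-- Evaluation of an integer polynomial at an element of `ZMod N`. -/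
def pEvalZ {N : ℕ} (P : Polynomial ℤ) (y : ZMod N) : ZMod N :=
  Polynomial.eval₂ (Int.castRingHom (ZMod N)) y P

/-- `Λ(f,g,k,p) = 𝔼_{x,y} f(x) g(x+P(y)) k(x+Q(y)) p(x+P(y)+Q(y))`. -/
def Lam {N : ℕ} [NeZero N] (P Q : Polynomial ℤ) (f g k p : ZMod N → ℂ) : ℂ :=
  (∑ x : ZMod N, ∑ y : ZMod N,
    f x * g (x + pEvalZ P y) * k (x + pEvalZ Q y) *
      p (x + pEvalZ P y + pEvalZ Q y)) / (N : ℂ) ^ 2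

/-- `e(x/N)` for `x : ZMod N`: the additive character `x ↦ e^{2πi x/N}`.
For `α = a/N ∈ (1/N)ℤ/ℤ` and `x : ZMod N`, `e(αx) = eN (a*x)`. -/
def eN {N : ℕ} [NeZero N] (x : ZMod N) : ℂ :=
  Complex.exp (2 * Real.pi * Complex.I * (x.val : ℂ) / (N : ℂ))

lemma eN_eq_stdAddChar {N : ℕ} [NeZero N] (x : ZMod N) : eN x = ZMod.stdAddChar x := by
  rw [ZMod.stdAddChar_apply, ZMod.toCircle_apply, eN]

lemma AddChar.quadratic_phase_add_add {R M : Type*} [CommRing R] [CommMonoid M]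
    (ψ : AddChar R M) (a b x u v : R) :
    ψ (a * (x + u + v) ^ 2 + b * (x + u + v)) =
      ψ (-(a * x ^ 2 + b * x)) * ψ (a * (x + u) ^ 2 + b * (x + u)) *
        ψ (a * (x + v) ^ 2 + b * (x + v)) * ψ (2 * a * u * v) := by
  have h : a * (x + u + v) ^ 2 + b * (x + u + v) =
      -(a * x ^ 2 + b * x) + (a * (x + u) ^ 2 + b * (x + u)) +
        (a * (x + v) ^ 2 + b * (x + v)) + 2 * a * u * v := by ring
  rw [h, AddChar.map_add_eq_mul, AddChar.map_add_eq_mul, AddChar.map_add_eq_mul]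

theorem stmt17_general (N : ℕ) [NeZero N]
    (P Q : Polynomial ℤ)
    (a b : ZMod N) (f g k : ZMod N → ℂ) :
    Lam P Q f g k (fun x => eN (a * x ^ 2 + b * x)) =
      (∑ x : ZMod N, ∑ y : ZMod N,
        (f x * eN (-(a * x ^ 2 + b * x))) *
        (g (x + pEvalZ P y) *
          eN (a * (x + pEvalZ P y) ^ 2 + b * (x + pEvalZ P y))) *
        (k (x + pEvalZ Q y) *
          eN (a * (x + pEvalZ Q y) ^ 2 + b * (x + pEvalZ Q y))) *
        eN (2 * a * pEvalZ P y * pEvalZ Q y)) / (N : ℂ) ^ 2 := by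
  unfold Lam
  congr 1
  refine Finset.sum_congr rfl fun x _ => Finset.sum_congr rfl fun y _ => ?_
  simp only [eN_eq_stdAddChar, AddChar.quadratic_phase_add_add]
  ring

theorem stmt17 (N : ℕ) [NeZero N] (hN : Nat.Prime N)
    (P Q : Polynomial ℤ) (hP0 : P.eval 0 = 0) (hQ0 : Q.eval 0 = 0)
    (a b : ZMod N) (f g k : ZMod N → ℂ) :
    Lam P Q f g k (fun x => eN (a * x ^ 2 + b * x)) =
      (∑ x : ZMod N, ∑ y : ZMod N,
        (f x * eN (-(a * x ^ 2 + b * x))) *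
        (g (x + pEvalZ P y) *
          eN (a * (x + pEvalZ P y) ^ 2 + b * (x + pEvalZ P y))) *
        (k (x + pEvalZ Q y) *
          eN (a * (x + pEvalZ Q y) ^ 2 + b * (x + pEvalZ Q y))) *
        eN (2 * a * pEvalZ P y * pEvalZ Q y)) / (N : ℂ) ^ 2 :=
  stmt17_general N P Q a b f g k

end
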